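/- arXiv:2401.12374 — 2 statements merged into one kernel-verified Lean document; each statement's English description precedes it below -/
import Mathlib

section
/- For every a ∈ ℂ and every ζ ∈ ℂ with ζ³ = 1, one has D_a(ζ) = 18·ζ² ≠ 0, R_a(ζ) = ζ, the derivative of R_a at ζ is 0, and the second derivative of R_a at ζ is 0. (Each third root of unity is a super-attracting fixed point of R_a of local degree 3.) -/
/-!
Since `ζ³ = 1`, the polynomial `N(z) - ζ·D_a(z)` (with `N` the numerator of `R_a`) is divisible by
`(z - ζ)³`, so near `ζ` we have `R_a(z) = ζ + (z - ζ)³ · g(z)` with `g` analytic. A function of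
this shape has vanishing first and second derivatives at `ζ`: its analytic order at `ζ`, after
subtracting the constant, is at least three.
-/

/-- The rational map `R_a` obtained from the Chebyshev–Halley method applied to `z^3-1`. -/
noncomputable def Ra (a z : ℂ) : ℂ :=
  (2*a*z^6 + (15 - a)*z^3 + (3 - a)) / (3*z^2*(5 - a + (1 + a)*z^3))

/-- The denominator of `R_a`. -/
noncomputable def Da (a z : ℂ) : ℂ := 3*z^2*(5 - a + (1 + a)*z^3)

open Filter Topology

theorem iteratedDeriv_eq_zero_of_eventuallyEq_add_pow_smul {𝕜 E : Type*}
    [NontriviallyNormedField 𝕜] [CharZero 𝕜] [NormedAddCommGroup E] [NormedSpace 𝕜 E]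
    [CompleteSpace E] {f g : 𝕜 → E} {z₀ : 𝕜} {n i : ℕ} (hg : AnalyticAt 𝕜 g z₀)
    (hfg : f =ᶠ[𝓝 z₀] fun z => f z₀ + (z - z₀) ^ n • g z) (hi₀ : 0 < i) (hin : i < n) :
    iteratedDeriv i f z₀ = 0 := by
  have hh : AnalyticAt 𝕜 (fun z => (z - z₀) ^ n • g z) z₀ := by fun_prop
  have horder : (n : ℕ∞) ≤ analyticOrderAt (fun z => (z - z₀) ^ n • g z) z₀ :=
    (natCast_le_analyticOrderAt hh).2 ⟨g, hg, .of_forall fun _ => rfl⟩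
  rw [(hfg.iteratedDeriv i).eq_of_nhds, iteratedDeriv_const_add hi₀]
  exact (natCast_le_analyticOrderAt_iff_iteratedDeriv_eq_zero hh).1 horder i hin

theorem Da_eq_of_cube_eq_one (a : ℂ) {ζ : ℂ} (hζ : ζ ^ 3 = 1) : Da a ζ = 18 * ζ ^ 2 := by
  unfold Da
  linear_combination 3 * ζ ^ 2 * (1 + a) * hζ

def Qa (a ζ z : ℂ) : ℂ :=
  2 * a * z ^ 3 + 3 * (a - 1) * ζ * z ^ 2 + 3 * (a - 3) * ζ ^ 2 * z + (a - 3)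

theorem numerator_sub_mul_Da (a z : ℂ) {ζ : ℂ} (hζ : ζ ^ 3 = 1) :
    2 * a * z ^ 6 + (15 - a) * z ^ 3 + (3 - a) - ζ * Da a z = (z - ζ) ^ 3 * Qa a ζ z := by
  unfold Da Qa
  linear_combination
    (3 * a * z * ζ ^ 2 - 9 * z * ζ ^ 2 - 6 * a * z ^ 2 * ζ + 24 * z ^ 2 * ζ + 2 * a * z ^ 3
      - 18 * z ^ 3 + a - 3) * hζ

theorem Ra_eq_add_pow_three_mul (a : ℂ) {ζ z : ℂ} (hζ : ζ ^ 3 = 1) (hz : Da a z ≠ 0) :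
    Ra a z = ζ + (z - ζ) ^ 3 * (Qa a ζ z / Da a z) := by
  rw [← mul_div_assoc, ← numerator_sub_mul_Da a z hζ, sub_div, mul_div_cancel_right₀ ζ hz]
  unfold Ra Da
  ring

/-- Each third root of unity is a super-attracting fixed point of `R_a` of local degree 3:
`D_a(ζ) = 18ζ² ≠ 0`, `R_a(ζ) = ζ`, `R_a'(ζ) = 0` and `R_a''(ζ) = 0`. -/
theorem stmt_3 (a ζ : ℂ) (hζ : ζ^3 = 1) :
    Da a ζ = 18*ζ^2 ∧ Da a ζ ≠ 0 ∧ Ra a ζ = ζ ∧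
    deriv (Ra a) ζ = 0 ∧ iteratedDeriv 2 (Ra a) ζ = 0 := by
  have hD := Da_eq_of_cube_eq_one a hζ
  have hDne : Da a ζ ≠ 0 := by
    rw [hD]
    exact mul_ne_zero (by norm_num) (pow_ne_zero 2 (by rintro rfl; norm_num at hζ))
  have hR : Ra a ζ = ζ := by simp [Ra_eq_add_pow_three_mul a hζ hDne]
  have hDcont : Continuous (Da a) := by unfold Da; fun_prop
  have hlocal : Ra a =ᶠ[𝓝 ζ] fun z => Ra a ζ + (z - ζ) ^ 3 • (Qa a ζ z / Da a z) := by
    filter_upwards [hDcont.continuousAt.eventually_ne hDne] with z hz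
    rw [hR, smul_eq_mul, Ra_eq_add_pow_three_mul a hζ hz]
  have hg : AnalyticAt ℂ (fun z => Qa a ζ z / Da a z) ζ :=
    AnalyticAt.div (by unfold Qa; fun_prop) (by unfold Da; fun_prop) hDne
  refine ⟨hD, hDne, hR, ?_, ?_⟩
  · rw [← iteratedDeriv_one]
    exact iteratedDeriv_eq_zero_of_eventuallyEq_add_pow_smul hg hlocal one_pos (by norm_num)
  · exact iteratedDeriv_eq_zero_of_eventuallyEq_add_pow_smul hg hlocal two_pos (by norm_num)
end

section
/- For every C > 0 there exist C' > 0 and δ > 0 such that for every a ∈ ℂ with 0 < |a| ≤ δ and every z ∈ ℂ with 0 < |z| < C·|a|^{2/3}, one has D_a(z) ≠ 0, D_a(R_a(z)) ≠ 0, and |R_a(R_a(z))| > C'/|a|^{1/3}. -/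
/-!
For small `z`, `R_a(z) ≈ (3 - a) / (3 (5 - a) z²)` is large: `|R_a z| ≥ 2 / (21 |z|²)`. For large
`w`, `R_a(w) ≈ 2 a w / (3 (1 + a))`, so `|R_a w| ≥ |a| |w| / 6` as soon as `|a| |w|³ ≥ 20`.
Write `s = |a|^{1/3}`. If `|z| < C s²` then `w = R_a z` satisfies `|w| > 2 / (21 C² s⁴)`, hence
`|a| |w|³ > 8 / (21³ C⁶ s⁹) ≥ 20` for `s` small, and then `|R_a w| ≥ s³ |w| / 6 > 1 / (63 C² s)`.
-/

noncomputable def Na (a z : ℂ) : ℂ := 2*a*z^6 + (15 - a)*z^3 + (3 - a)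

theorem Ra_eq_div (a z : ℂ) : Ra a z = Na a z / Da a z := rfl

theorem norm_Da (a z : ℂ) : ‖Da a z‖ = 3 * ‖z‖ ^ 2 * ‖5 - a + (1 + a) * z ^ 3‖ := by
  simp [Da]

theorem Da_ne_zero {a z : ℂ} (hz : z ≠ 0) (h : 5 - a + (1 + a) * z ^ 3 ≠ 0) : Da a z ≠ 0 :=
  mul_ne_zero (mul_ne_zero three_ne_zero (pow_ne_zero 2 hz)) h

section RCLike

variable {𝕜 : Type*} [RCLike 𝕜] (n : ℕ) [n.AtLeastTwo] (a : 𝕜)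

theorem RCLike.norm_ofNat_sub_le : ‖(OfNat.ofNat n : 𝕜) - a‖ ≤ OfNat.ofNat n + ‖a‖ := by
  simpa using norm_sub_le (OfNat.ofNat n : 𝕜) a

theorem RCLike.ofNat_sub_norm_le : OfNat.ofNat n - ‖a‖ ≤ ‖(OfNat.ofNat n : 𝕜) - a‖ := by
  simpa using norm_sub_norm_le (OfNat.ofNat n : 𝕜) a

end RCLike

theorem Da_ne_zero_and_le_norm_Ra_of_norm_le {a z : ℂ} (ha : ‖a‖ ≤ 1 / 2) (hz0 : z ≠ 0)
    (hz : ‖z‖ ≤ 1 / 4) : Da a z ≠ 0 ∧ 2 ≤ 21 * ‖z‖ ^ 2 * ‖Ra a z‖ := by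
  have hz3 : ‖z ^ 3‖ ≤ 1 / 64 := by
    rw [norm_pow]; calc ‖z‖ ^ 3 ≤ (1 / 4) ^ 3 := by gcongr
      _ = 1 / 64 := by norm_num
  have h1a : ‖1 + a‖ ≤ 3 / 2 := by linarith [norm_add_le 1 a, norm_one (α := ℂ)]
  have hT : 2 ≤ ‖5 - a + (1 + a) * z ^ 3‖ ∧ ‖5 - a + (1 + a) * z ^ 3‖ ≤ 7 := by
    have hmul := norm_mul_le (1 + a) (z ^ 3)
    have : ‖1 + a‖ * ‖z ^ 3‖ ≤ 3 / 2 * (1 / 64) := by gcongr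
    constructor <;> linarith [norm_sub_le_norm_add (5 - a) ((1 + a) * z ^ 3),
      norm_add_le (5 - a) ((1 + a) * z ^ 3), RCLike.ofNat_sub_norm_le 5 a,
      RCLike.norm_ofNat_sub_le 5 a]
  have hN : 2 ≤ ‖Na a z‖ := by
    have hrest : ‖15 - a + 2 * a * z ^ 3‖ ≤ 17 := by
      have : ‖2 * a * z ^ 3‖ ≤ 1 := by
        rw [norm_mul, norm_mul, Complex.norm_two]
        nlinarith [norm_nonneg a, norm_nonneg (z ^ 3)]
      linarith [norm_add_le (15 - a) (2 * a * z ^ 3), RCLike.norm_ofNat_sub_le 15 a]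
    have h : ‖z ^ 3 * (15 - a + 2 * a * z ^ 3)‖ ≤ 1 / 64 * 17 := by
      rw [norm_mul]; gcongr
    have : Na a z = (3 - a) + z ^ 3 * (15 - a + 2 * a * z ^ 3) := by unfold Na; ring
    rw [this]
    linarith [norm_sub_le_norm_add (3 - a) (z ^ 3 * (15 - a + 2 * a * z ^ 3)),
      RCLike.ofNat_sub_norm_le 3 a]
  have hD : Da a z ≠ 0 := Da_ne_zero hz0 (norm_pos_iff.1 (by linarith))
  refine ⟨hD, ?_⟩
  rw [Ra_eq_div, norm_div, ← mul_div_assoc, le_div_iff₀ (norm_pos_iff.2 hD), norm_Da]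
  have := norm_pos_iff.2 hz0
  nlinarith [pow_pos this 2]

theorem Da_ne_zero_and_le_norm_Ra_of_le_norm_mul {a w : ℂ} (ha : ‖a‖ ≤ 1 / 2)
    (hw : 20 ≤ ‖a‖ * ‖w‖ ^ 3) : Da a w ≠ 0 ∧ ‖a‖ * ‖w‖ ≤ 6 * ‖Ra a w‖ := by
  have hW3 : 40 ≤ ‖w ^ 3‖ := by
    rw [norm_pow]; nlinarith [mul_le_mul_of_nonneg_right ha (pow_nonneg (norm_nonneg w) 3)]
  have hw0 : w ≠ 0 := by rintro rfl; norm_num at hW3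
  have h1a : 1 / 2 ≤ ‖1 + a‖ ∧ ‖1 + a‖ ≤ 3 / 2 := by
    constructor <;> linarith [norm_add_le 1 a, norm_sub_le_norm_add 1 a, norm_one (α := ℂ)]
  have hT : ‖w ^ 3‖ / 4 ≤ ‖5 - a + (1 + a) * w ^ 3‖ ∧
      ‖5 - a + (1 + a) * w ^ 3‖ ≤ 2 * ‖w ^ 3‖ := by
    have h : ‖(1 + a) * w ^ 3‖ = ‖1 + a‖ * ‖w ^ 3‖ := norm_mul _ _
    have h' : 1 / 2 * ‖w ^ 3‖ ≤ ‖(1 + a) * w ^ 3‖ ∧ ‖(1 + a) * w ^ 3‖ ≤ 3 / 2 * ‖w ^ 3‖ := by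
      rw [h]; constructor <;> gcongr <;> linarith
    have hc := norm_le_add_norm_add ((1 + a) * w ^ 3) (5 - a)
    rw [add_comm ((1 + a) * w ^ 3)] at hc
    constructor <;> linarith [norm_add_le (5 - a) ((1 + a) * w ^ 3), RCLike.norm_ofNat_sub_le 5 a]
  have hN : ‖a‖ * ‖w ^ 3‖ ^ 2 ≤ ‖Na a w‖ := by
    have hlead : ‖2 * a * (w ^ 3) ^ 2‖ = 2 * ‖a‖ * ‖w ^ 3‖ ^ 2 := by
      rw [norm_mul, norm_mul, norm_pow, Complex.norm_two]
    have hrest : ‖(15 - a) * w ^ 3 + (3 - a)‖ ≤ 16 * ‖w ^ 3‖ + 4 := by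
      have : ‖(15 - a) * w ^ 3‖ ≤ 16 * ‖w ^ 3‖ := by
        rw [norm_mul]; gcongr; linarith [RCLike.norm_ofNat_sub_le 15 a]
      linarith [norm_add_le ((15 - a) * w ^ 3) (3 - a), RCLike.norm_ofNat_sub_le 3 a]
    have : Na a w = 2 * a * (w ^ 3) ^ 2 + ((15 - a) * w ^ 3 + (3 - a)) := by unfold Na; ring
    rw [this]
    have : ‖a‖ * ‖w ^ 3‖ ^ 2 ≥ 20 * ‖w ^ 3‖ := by rw [norm_pow] at *; nlinarith
    linarith [norm_sub_le_norm_add (2 * a * (w ^ 3) ^ 2) ((15 - a) * w ^ 3 + (3 - a))]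
  have hD : Da a w ≠ 0 := Da_ne_zero hw0 (norm_pos_iff.1 (by linarith))
  refine ⟨hD, ?_⟩
  rw [Ra_eq_div, norm_div, ← mul_div_assoc, le_div_iff₀ (norm_pos_iff.2 hD), norm_Da]
  rw [norm_pow] at hW3 hN hT
  have := norm_pos_iff.2 hw0
  nlinarith [pow_pos this 2]

theorem Da_ne_zero_and_lt_norm_Ra_Ra {a z : ℂ} {C s : ℝ} (hs : 0 < s) (hsa : s ^ 3 = ‖a‖)
    (ha : ‖a‖ ≤ 1 / 2) (hCs2 : C * s ^ 2 ≤ 1 / 4)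
    (hCs9 : 20 * 21 ^ 3 * C ^ 6 * s ^ 9 ≤ 8) (hz0 : z ≠ 0) (hz : ‖z‖ < C * s ^ 2) :
    Da a z ≠ 0 ∧ Da a (Ra a z) ≠ 0 ∧ 1 / (63 * C ^ 2) / s < ‖Ra a (Ra a z)‖ := by
  have hC : 0 < C := pos_of_mul_pos_left ((norm_nonneg z).trans_lt hz) (by positivity)
  obtain ⟨hD₁, hR₁⟩ := Da_ne_zero_and_le_norm_Ra_of_norm_le ha hz0 (by linarith)
  have hW : 2 < 21 * C ^ 2 * s ^ 4 * ‖Ra a z‖ := by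
    have hpos : 0 < ‖Ra a z‖ := by
      nlinarith [norm_nonneg (Ra a z), sq_nonneg ‖z‖]
    have hz2 : ‖z‖ ^ 2 < C ^ 2 * s ^ 4 := by
      calc ‖z‖ ^ 2 < (C * s ^ 2) ^ 2 := by gcongr
        _ = C ^ 2 * s ^ 4 := by ring
    nlinarith
  have hW3 : 20 ≤ ‖a‖ * ‖Ra a z‖ ^ 3 := by
    have hu : 0 < (21 * C ^ 2 * s ^ 4) ^ 3 := by positivity
    have h8 : 2 ^ 3 < (21 * C ^ 2 * s ^ 4 * ‖Ra a z‖) ^ 3 := by gcongr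
    have h20 : 20 * (21 * C ^ 2 * s ^ 4) ^ 3 ≤ 8 * s ^ 3 := by
      calc 20 * (21 * C ^ 2 * s ^ 4) ^ 3 = (20 * 21 ^ 3 * C ^ 6 * s ^ 9) * s ^ 3 := by ring
        _ ≤ 8 * s ^ 3 := by gcongr
    rw [← hsa]
    refine (lt_of_mul_lt_mul_left ?_ hu.le).le
    calc (21 * C ^ 2 * s ^ 4) ^ 3 * 20 ≤ 8 * s ^ 3 := by linarith
      _ < (21 * C ^ 2 * s ^ 4 * ‖Ra a z‖) ^ 3 * s ^ 3 := by gcongr; linarith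
      _ = (21 * C ^ 2 * s ^ 4) ^ 3 * (s ^ 3 * ‖Ra a z‖ ^ 3) := by ring
  obtain ⟨hD₂, hR₂⟩ := Da_ne_zero_and_le_norm_Ra_of_le_norm_mul ha hW3
  refine ⟨hD₁, hD₂, ?_⟩
  rw [div_div, div_lt_iff₀ (by positivity)]
  rw [← hsa] at hR₂
  nlinarith [mul_le_mul_of_nonneg_right hR₂ (by positivity : (0:ℝ) ≤ 63 * C ^ 2 * s)]

/-- For every `C > 0` there is `C' > 0` such that, for `|a|` small enough (`a ≠ 0`),
every `z` with `0 < |z| < C|a|^{2/3}` satisfies `|R_a²(z)| > C'/|a|^{1/3}`. -/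
theorem stmt_16 (C : ℝ) (hC : 0 < C) :
    ∃ C' > (0:ℝ), ∃ δ > (0:ℝ), ∀ a : ℂ, 0 < ‖a‖ → ‖a‖ ≤ δ →
      ∀ z : ℂ, z ≠ 0 → ‖z‖ < C * ‖a‖ ^ ((2:ℝ)/3) →
        Da a z ≠ 0 ∧ Da a (Ra a z) ≠ 0 ∧
        C' / ‖a‖ ^ ((1:ℝ)/3) < ‖Ra a (Ra a z)‖ := by
  obtain ⟨ε, hε, hsmall⟩ : ∃ ε > 0, ∀ ⦃s : ℝ⦄, dist s 0 < ε →
      s ^ 3 < 1 / 2 ∧ C * s ^ 2 < 1 / 4 ∧ 20 * 21 ^ 3 * C ^ 6 * s ^ 9 < 8 := by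
    refine Metric.eventually_nhds_iff.1 ((Filter.Eventually.and ?_ (.and ?_ ?_))) <;>
      exact ContinuousAt.eventually_lt (by fun_prop) (by fun_prop) (by norm_num)
  refine ⟨1 / (63 * C ^ 2), by positivity, (ε / 2) ^ 3, by positivity, ?_⟩
  intro a ha haδ z hz0 hz
  set s := ‖a‖ ^ ((1:ℝ)/3) with hs_def
  have hs : 0 < s := by positivity
  have hsa : s ^ 3 = ‖a‖ := by
    rw [hs_def, ← Real.rpow_natCast, ← Real.rpow_mul ha.le]; norm_num
  have hs2 : ‖a‖ ^ ((2:ℝ)/3) = s ^ 2 := by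
    rw [hs_def, ← Real.rpow_natCast, ← Real.rpow_mul ha.le]; norm_num
  have hsε : dist s 0 < ε := by
    rw [Real.dist_0_eq_abs, abs_of_pos hs]
    have : s ≤ ε / 2 := by
      rw [← pow_le_pow_iff_left₀ hs.le (by positivity) three_ne_zero, hsa]; exact haδ
    linarith
  obtain ⟨h1, h2, h3⟩ := hsmall hsε
  rw [hs2] at hz
  exact Da_ne_zero_and_lt_norm_Ra_Ra hs hsa (hsa ▸ h1.le) h2.le h3.le hz0 hz
end
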